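/- For nonnegative integers with $j_0\le j_1$, $0\le i$, set $y_a=(l-i-j_a)/3$ (assumed integral and nonnegative) and $\bar b^{l,i}_{j_0,j_1}=(0,\,y_1,\,-2y_1+3y_0+i,\,y_0+i,\,y_0+j_0,\,0)\in B_l$. Then $\bar b^{l,i}_{j_0,j_1}$ is a highest weight element for the indices $0$ and $1$: $\tilde e_0\,\bar b^{l,i}_{j_0,j_1}=0$ and $\tilde e_1\,\bar b^{l,i}_{j_0,j_1}=0$ in $B_l$, and moreover $\varphi_0(\bar b^{l,i}_{j_0,j_1})=j_0$ and $\varphi_1(\bar b^{l,i}_{j_0,j_1})=j_1$. -/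

import Mathlib

/-- An element `(x₁,x₂,x₃,x̄₃,x̄₂,x̄₁)` (fields `x1 x2 x3 y3 y2 y1`). -/
structure C6 where
  x1 : ℤ
  x2 : ℤ
  x3 : ℤ
  y3 : ℤ
  y2 : ℤ
  y1 : ℤ
deriving DecidableEq

attribute [local instance] Classical.propDecidable

noncomputable section

/-- Membership in `B_{≥0}`: all coordinates nonnegative and `x₃ ≡ x̄₃ (mod 2)`. -/
def memB (b : C6) : Prop :=
  0 ≤ b.x1 ∧ 0 ≤ b.x2 ∧ 0 ≤ b.x3 ∧ 0 ≤ b.y3 ∧ 0 ≤ b.y2 ∧ 0 ≤ b.y1 ∧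
    b.x3 % 2 = b.y3 % 2

/-- Return `some b` if all coordinates are nonnegative, else `none` (i.e. `0`). -/
def chk (b : C6) : Option C6 :=
  if 0 ≤ b.x1 ∧ 0 ≤ b.x2 ∧ 0 ≤ b.x3 ∧ 0 ≤ b.y3 ∧ 0 ≤ b.y2 ∧ 0 ≤ b.y1 then some b
  else none

/-- The `G₂` one-row tableau operator `ẽ₁`. -/
def e1op (b : C6) : Option C6 :=
  if max (b.x2 - b.x3) 0 ≤ b.y2 - b.y3 then
    chk ⟨b.x1, b.x2, b.x3, b.y3, b.y2 + 1, b.y1 - 1⟩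
  else if b.y2 - b.y3 < 0 ∧ 0 ≤ b.x3 - b.x2 then
    chk ⟨b.x1, b.x2, b.x3 + 1, b.y3 - 1, b.y2, b.y1⟩
  else if max (b.y2 - b.y3) 0 < b.x2 - b.x3 then
    chk ⟨b.x1 + 1, b.x2 - 1, b.x3, b.y3, b.y2, b.y1⟩
  else none

/-- The `G₂` one-row tableau operator `f̃₁`. -/
def f1op (b : C6) : Option C6 :=
  if max (b.y2 - b.y3) 0 ≤ b.x2 - b.x3 then
    chk ⟨b.x1 - 1, b.x2 + 1, b.x3, b.y3, b.y2, b.y1⟩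
  else if b.y2 - b.y3 ≤ 0 ∧ 0 < b.x3 - b.x2 then
    chk ⟨b.x1, b.x2, b.x3 - 1, b.y3 + 1, b.y2, b.y1⟩
  else if max (b.x2 - b.x3) 0 < b.y2 - b.y3 then
    chk ⟨b.x1, b.x2, b.x3, b.y3, b.y2 - 1, b.y1 + 1⟩
  else none

def zz1 (b : C6) : ℤ := b.y1 - b.x1
def zz2 (b : C6) : ℤ := b.y2 - b.y3
def zz3 (b : C6) : ℤ := b.x3 - b.x2
def zz4 (b : C6) : ℤ := (b.y3 - b.x3) / 2

def F1c (b : C6) : Prop :=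
  zz1 b + zz2 b + zz3 b + 3 * zz4 b ≤ 0 ∧ zz1 b + zz2 b + 3 * zz4 b ≤ 0 ∧
    zz1 b + zz2 b ≤ 0 ∧ zz1 b ≤ 0
def F2c (b : C6) : Prop :=
  zz1 b + zz2 b + zz3 b + 3 * zz4 b ≤ 0 ∧ zz2 b + 3 * zz4 b ≤ 0 ∧
    zz2 b ≤ 0 ∧ 0 < zz1 b
def F3c (b : C6) : Prop :=
  zz1 b + zz3 b + 3 * zz4 b ≤ 0 ∧ zz3 b + 3 * zz4 b ≤ 0 ∧ zz4 b ≤ 0 ∧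
    0 < zz2 b ∧ 0 < zz1 b + zz2 b
def F4c (b : C6) : Prop :=
  0 < zz1 b + zz2 b + 3 * zz4 b ∧ 0 < zz2 b + 3 * zz4 b ∧ 0 < zz4 b ∧
    zz3 b ≤ 0 ∧ zz1 b + zz3 b ≤ 0
def F5c (b : C6) : Prop :=
  0 < zz1 b + zz2 b + zz3 b + 3 * zz4 b ∧ 0 < zz3 b + 3 * zz4 b ∧
    0 < zz3 b ∧ zz1 b ≤ 0
def F6c (b : C6) : Prop :=
  0 < zz1 b + zz2 b + zz3 b + 3 * zz4 b ∧ 0 < zz1 b + zz3 b + 3 * zz4 b ∧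
    0 < zz1 b + zz3 b ∧ 0 < zz1 b

def E1c (b : C6) : Prop :=
  zz1 b + zz2 b + zz3 b + 3 * zz4 b < 0 ∧ zz1 b + zz2 b + 3 * zz4 b < 0 ∧
    zz1 b + zz2 b < 0 ∧ zz1 b < 0
def E2c (b : C6) : Prop :=
  zz1 b + zz2 b + zz3 b + 3 * zz4 b < 0 ∧ zz2 b + 3 * zz4 b < 0 ∧
    zz2 b < 0 ∧ 0 ≤ zz1 b
def E3c (b : C6) : Prop :=
  zz1 b + zz3 b + 3 * zz4 b < 0 ∧ zz3 b + 3 * zz4 b < 0 ∧ zz4 b < 0 ∧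
    0 ≤ zz2 b ∧ 0 ≤ zz1 b + zz2 b
def E4c (b : C6) : Prop :=
  0 ≤ zz1 b + zz2 b + 3 * zz4 b ∧ 0 ≤ zz2 b + 3 * zz4 b ∧ 0 ≤ zz4 b ∧
    zz3 b < 0 ∧ zz1 b + zz3 b < 0
def E5c (b : C6) : Prop :=
  0 ≤ zz1 b + zz2 b + zz3 b + 3 * zz4 b ∧ 0 ≤ zz3 b + 3 * zz4 b ∧
    0 ≤ zz3 b ∧ zz1 b < 0
def E6c (b : C6) : Prop :=
  0 ≤ zz1 b + zz2 b + zz3 b + 3 * zz4 b ∧ 0 ≤ zz1 b + zz3 b + 3 * zz4 b ∧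
    0 ≤ zz1 b + zz3 b ∧ 0 ≤ zz1 b

/-- The operator `f̃₀` on `B_{≥0}`, given by the six cases `(F₁)–(F₆)`. -/
def f0op (b : C6) : Option C6 :=
  if F1c b then chk ⟨b.x1 + 1, b.x2, b.x3, b.y3, b.y2, b.y1⟩
  else if F2c b then chk ⟨b.x1, b.x2, b.x3 + 1, b.y3 + 1, b.y2, b.y1 - 1⟩
  else if F3c b then chk ⟨b.x1, b.x2, b.x3 + 2, b.y3, b.y2 - 1, b.y1⟩
  else if F4c b then chk ⟨b.x1, b.x2 + 1, b.x3, b.y3 - 2, b.y2, b.y1⟩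
  else if F5c b then chk ⟨b.x1 + 1, b.x2, b.x3 - 1, b.y3 - 1, b.y2, b.y1⟩
  else if F6c b then chk ⟨b.x1, b.x2, b.x3, b.y3, b.y2, b.y1 - 1⟩
  else none

/-- The operator `ẽ₀` on `B_{≥0}`, given by the six cases `(E₁)–(E₆)`. -/
def e0op (b : C6) : Option C6 :=
  if E1c b then chk ⟨b.x1 - 1, b.x2, b.x3, b.y3, b.y2, b.y1⟩
  else if E2c b then chk ⟨b.x1, b.x2, b.x3 - 1, b.y3 - 1, b.y2, b.y1 + 1⟩
  else if E3c b then chk ⟨b.x1, b.x2, b.x3 - 2, b.y3, b.y2 + 1, b.y1⟩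
  else if E4c b then chk ⟨b.x1, b.x2 - 1, b.x3, b.y3 + 2, b.y2, b.y1⟩
  else if E5c b then chk ⟨b.x1 - 1, b.x2, b.x3 + 1, b.y3 + 1, b.y2, b.y1⟩
  else if E6c b then chk ⟨b.x1, b.x2, b.x3, b.y3, b.y2, b.y1 + 1⟩
  else none

/-- `s(b) = x₁+x₂+(x₃+x̄₃)/2+x̄₂+x̄₁`. -/
def sB (b : C6) : ℤ := b.x1 + b.x2 + (b.x3 + b.y3) / 2 + b.y2 + b.y1

/-- `max A` for `A = (0, z₁, z₁+z₂, z₁+z₂+3z₄, z₁+z₂+z₃+3z₄, 2z₁+z₂+z₃+3z₄)`. -/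
def maxA (b : C6) : ℤ :=
  max 0 (max (zz1 b) (max (zz1 b + zz2 b) (max (zz1 b + zz2 b + 3 * zz4 b)
    (max (zz1 b + zz2 b + zz3 b + 3 * zz4 b)
      (2 * zz1 b + zz2 b + zz3 b + 3 * zz4 b)))))

def phi0 (l : ℤ) (b : C6) : ℤ := l - sB b + maxA b

def eps0 (l : ℤ) (b : C6) : ℤ :=
  l - sB b + maxA b - (2 * zz1 b + zz2 b + zz3 b + 3 * zz4 b)

def phi1 (b : C6) : ℤ := b.x1 + max (b.x3 - b.x2 + max (b.y2 - b.y3) 0) 0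

/-! The element `b̄` has `z₁ = 0`, `z₂ = j₀ - i`, `z₃ = j₁ - j₀ + i` and `z₃ + 3z₄ = i`, all
nonnegative. In that region `ẽ₀` is given by case `(E₆)`, which raises `x̄₁` and hence `s` by one;
since `s(b̄) = l` this leaves `B_l`. In the same region `ẽ₁` would lower `x̄₁ = 0`, the largest entry
of `A` is the last one, `2z₁ + z₂ + z₃ + 3z₄ = j₀`, and `φ₁ = x₁ + z₃ + z₂ = j₁`. -/

theorem eq_of_chk_eq_some {c b : C6} (h : chk c = some b) : b = c := by
  unfold chk at h
  split_ifs at h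
  exact (Option.some_injective _ h).symm

section NonnegRegion

variable {b : C6}

theorem e0op_eq_of_zz_nonneg (h1 : 0 ≤ zz1 b) (h2 : 0 ≤ zz2 b) (h3 : 0 ≤ zz3 b)
    (h34 : 0 ≤ zz3 b + 3 * zz4 b) : e0op b = chk { b with y1 := b.y1 + 1 } := by
  have hE1 : ¬ E1c b := fun h => by linarith [h.2.2.2]
  have hE2 : ¬ E2c b := fun h => by linarith [h.2.2.1]
  have hE3 : ¬ E3c b := fun h => by linarith [h.2.1]
  have hE4 : ¬ E4c b := fun h => by linarith [h.2.2.2.1]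
  have hE5 : ¬ E5c b := fun h => by linarith [h.2.2.2]
  have hE6 : E6c b := ⟨by linarith, by linarith, by linarith, h1⟩
  rw [e0op, if_neg hE1, if_neg hE2, if_neg hE3, if_neg hE4, if_neg hE5, if_pos hE6]

theorem sB_of_e0op_eq_some {b' : C6} (h1 : 0 ≤ zz1 b) (h2 : 0 ≤ zz2 b) (h3 : 0 ≤ zz3 b)
    (h34 : 0 ≤ zz3 b + 3 * zz4 b) (h : e0op b = some b') : sB b' = sB b + 1 := by
  rw [e0op_eq_of_zz_nonneg h1 h2 h3 h34] at h
  rw [eq_of_chk_eq_some h, sB, sB]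
  ring

theorem phi0_eq_of_zz_nonneg (l : ℤ) (h1 : 0 ≤ zz1 b) (h2 : 0 ≤ zz2 b) (h3 : 0 ≤ zz3 b)
    (h34 : 0 ≤ zz3 b + 3 * zz4 b) :
    phi0 l b = l - sB b + (2 * zz1 b + zz2 b + zz3 b + 3 * zz4 b) := by
  simp only [phi0, maxA]
  omega

theorem e1op_eq_none_of_zz_nonneg (h2 : 0 ≤ zz2 b) (h3 : 0 ≤ zz3 b) (hy1 : b.y1 = 0) :
    e1op b = none := by
  unfold zz2 zz3 at *
  rw [e1op, if_pos (by omega), chk, if_neg (by dsimp only; omega)]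

theorem phi1_eq_of_zz_nonneg (h2 : 0 ≤ zz2 b) (h3 : 0 ≤ zz3 b) :
    phi1 b = b.x1 + zz3 b + zz2 b := by
  unfold zz2 zz3 at *
  simp only [phi1]
  omega

end NonnegRegion

section Bbar

variable (i j0 y0 y1 : ℤ)

def bbar : C6 := ⟨0, y1, -2 * y1 + 3 * y0 + i, y0 + i, y0 + j0, 0⟩

theorem zz1_bbar : zz1 (bbar i j0 y0 y1) = 0 := by
  simp [zz1, bbar]

theorem zz2_bbar : zz2 (bbar i j0 y0 y1) = j0 - i := by
  simp only [zz2, bbar]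
  ring

theorem zz3_bbar : zz3 (bbar i j0 y0 y1) = 3 * (y0 - y1) + i := by
  simp only [zz3, bbar]
  ring

theorem zz4_bbar : zz4 (bbar i j0 y0 y1) = y1 - y0 := by
  simp only [zz4, bbar]
  omega

theorem sB_bbar : sB (bbar i j0 y0 y1) = 3 * y0 + i + j0 := by
  simp only [sB, bbar]
  omega

variable {i j0 y0 y1}

theorem memB_bbar (hi : 0 ≤ i) (hj0 : 0 ≤ j0) (hy1 : 0 ≤ y1) (hy : y1 ≤ y0) :
    memB (bbar i j0 y0 y1) := by
  simp only [memB, bbar]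
  omega

end Bbar

theorem bbar_highest_general (l i j0 j1 y0 y1 : ℤ)
    (hi : 0 ≤ i) (hij0 : i ≤ j0) (hj01 : j0 ≤ j1)
    (hy1 : 0 ≤ y1)
    (hy0e : 3 * y0 = l - i - j0) (hy1e : 3 * y1 = l - i - j1) :
    (memB ⟨0, y1, -2 * y1 + 3 * y0 + i, y0 + i, y0 + j0, 0⟩ ∧
      sB ⟨0, y1, -2 * y1 + 3 * y0 + i, y0 + i, y0 + j0, 0⟩ ≤ l) ∧
    (∀ b', e0op ⟨0, y1, -2 * y1 + 3 * y0 + i, y0 + i, y0 + j0, 0⟩ = some b' →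
      ¬ sB b' ≤ l) ∧
    e1op ⟨0, y1, -2 * y1 + 3 * y0 + i, y0 + i, y0 + j0, 0⟩ = none ∧
    phi0 l ⟨0, y1, -2 * y1 + 3 * y0 + i, y0 + i, y0 + j0, 0⟩ = j0 ∧
    phi1 ⟨0, y1, -2 * y1 + 3 * y0 + i, y0 + i, y0 + j0, 0⟩ = j1 := by
  have hgap : 3 * (y0 - y1) = j1 - j0 := by omega
  have hs : sB (bbar i j0 y0 y1) = l := by rw [sB_bbar]; omega
  have h1 : 0 ≤ zz1 (bbar i j0 y0 y1) := (zz1_bbar ..).ge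
  have h2 : 0 ≤ zz2 (bbar i j0 y0 y1) := by rw [zz2_bbar]; omega
  have h3 : 0 ≤ zz3 (bbar i j0 y0 y1) := by rw [zz3_bbar]; omega
  have h34 : 0 ≤ zz3 (bbar i j0 y0 y1) + 3 * zz4 (bbar i j0 y0 y1) := by
    rw [zz3_bbar, zz4_bbar]; omega
  refine ⟨⟨memB_bbar hi (hi.trans hij0) hy1 (by omega), hs.le⟩, fun b' hb' => ?_,
    e1op_eq_none_of_zz_nonneg h2 h3 rfl, ?_, ?_⟩
  · rw [sB_of_e0op_eq_some h1 h2 h3 h34 hb', hs]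
    omega
  · refine (phi0_eq_of_zz_nonneg l h1 h2 h3 h34).trans ?_
    rw [hs, zz1_bbar, zz2_bbar, zz3_bbar, zz4_bbar]
    ring
  · refine (phi1_eq_of_zz_nonneg h2 h3).trans ?_
    rw [zz3_bbar, zz2_bbar]
    simp only [bbar]
    omega

/-- For `j₀ ≤ j₁`, the element
`b̄ = (0, y₁, -2y₁+3y₀+i, y₀+i, y₀+j₀, 0) ∈ B_l`, with `yₐ = (l-i-jₐ)/3`,
is `(0,1)`-highest weight: `ẽ₀ b̄ = 0` and `ẽ₁ b̄ = 0` in `B_l`, and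
`φ₀(b̄) = j₀`, `φ₁(b̄) = j₁`. -/
theorem bbar_highest (l i j0 j1 y0 y1 : ℤ)
    (hi : 0 ≤ i) (hij0 : i ≤ j0) (hj01 : j0 ≤ j1) (hj1 : j1 ≤ l - i)
    (hy0 : 0 ≤ y0) (hy1 : 0 ≤ y1)
    (hy0e : 3 * y0 = l - i - j0) (hy1e : 3 * y1 = l - i - j1) :
    (memB ⟨0, y1, -2 * y1 + 3 * y0 + i, y0 + i, y0 + j0, 0⟩ ∧
      sB ⟨0, y1, -2 * y1 + 3 * y0 + i, y0 + i, y0 + j0, 0⟩ ≤ l) ∧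
    (∀ b', e0op ⟨0, y1, -2 * y1 + 3 * y0 + i, y0 + i, y0 + j0, 0⟩ = some b' →
      ¬ sB b' ≤ l) ∧
    e1op ⟨0, y1, -2 * y1 + 3 * y0 + i, y0 + i, y0 + j0, 0⟩ = none ∧
    phi0 l ⟨0, y1, -2 * y1 + 3 * y0 + i, y0 + i, y0 + j0, 0⟩ = j0 ∧
    phi1 ⟨0, y1, -2 * y1 + 3 * y0 + i, y0 + i, y0 + j0, 0⟩ = j1 :=
  bbar_highest_general l i j0 j1 y0 y1 hi hij0 hj01 hy1 hy0e hy1e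

end
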